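/- For the blurred-saturated detector coarse graining Λ_CG and the evolution |ψ_t⟩ = e^{−iJt}(c_{00}|00⟩ + c_{11}|11⟩) + e^{iJt}(c_{01}|01⟩ + c_{10}|10⟩), the effective state ρ_t = Λ_CG(|ψ_t⟩⟨ψ_t|) equals [[|c_{00}|², c_{00}(e^{−2iJt}(c̄_{01}+c̄_{10})+c̄_{11})/√3],[c̄_{00}(e^{2iJt}(c_{01}+c_{10})+c_{11})/√3, |c_{01}|²+|c_{10}|²+|c_{11}|²]]. -/

import Mathlib

/-!
The channel acts on a pure state `ψ` as `∑ᵢ |Kᵢψ⟩⟨Kᵢψ|`, and the four vectors `Kᵢψ` are read off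
the Kraus matrices: only `K₀` reaches the ground level, giving the populations and the coherences,
while the excited population is `⅓(|a+b+c|² + |a-c|² + |a-b|² + |b-c|²) = |a|² + |b|² + |c|²`.
For `ψ_t` the components carry the phases `ū, u, u, ū` with `u = e^{iJt}` unimodular: they cancel
in every modulus and leave `ū²` (resp. `u²`) in the coherences.
-/

open Matrix

/-- The four Kraus operators of the blurred-and-saturated detector.
Basis ordering of `Fin 4`: `|00⟩, |01⟩, |10⟩, |11⟩`. -/
noncomputable def Kdet : Fin 4 → Matrix (Fin 2) (Fin 4) ℂ
  | 0 => !![1, 0, 0, 0; 0, 1/Real.sqrt 3, 1/Real.sqrt 3, 1/Real.sqrt 3]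
  | 1 => !![0, 0, 0, 0; 0, 1/Real.sqrt 3, 0, -(1/Real.sqrt 3)]
  | 2 => !![0, 0, 0, 0; 0, 1/Real.sqrt 3, -(1/Real.sqrt 3), 0]
  | 3 => !![0, 0, 0, 0; 0, 0, 1/Real.sqrt 3, -(1/Real.sqrt 3)]

/-- The evolved state `|ψ_t⟩ = e^{-iJt}(c₀₀|00⟩+c₁₁|11⟩) +
e^{iJt}(c₀₁|01⟩+c₁₀|10⟩)`, with components ordered `00,01,10,11`. -/
noncomputable def psiT (J t : ℝ) (c : Fin 4 → ℂ) : Fin 4 → ℂ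
  | 0 => Complex.exp (-(Complex.I * J * t)) * c 0
  | 1 => Complex.exp (Complex.I * J * t) * c 1
  | 2 => Complex.exp (Complex.I * J * t) * c 2
  | 3 => Complex.exp (-(Complex.I * J * t)) * c 3

theorem Matrix.mul_vecMulVec_star_mul_conjTranspose {α l m : Type*} [NonUnitalSemiring α]
    [StarRing α] [Fintype m] (M : Matrix l m α) (x : m → α) :
    M * vecMulVec x (star x) * Mᴴ = vecMulVec (M *ᵥ x) (star (M *ᵥ x)) := by
  rw [mul_vecMulVec, vecMulVec_mul, star_mulVec]

theorem Complex.exp_neg_eq_star_exp {z : ℂ} (hz : star z = -z) :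
    Complex.exp (-z) = star (Complex.exp z) := by
  rw [← hz]
  exact Complex.exp_conj z

section Kdet

variable (ψ : Fin 4 → ℂ)

theorem Kdet_zero_mulVec : Kdet 0 *ᵥ ψ = ![ψ 0, (ψ 1 + ψ 2 + ψ 3) / Real.sqrt 3] := by
  ext i; fin_cases i <;> simp [Kdet, mulVec, dotProduct, Fin.sum_univ_four]; ring

theorem Kdet_one_mulVec : Kdet 1 *ᵥ ψ = ![0, (ψ 1 - ψ 3) / Real.sqrt 3] := by
  ext i; fin_cases i <;> simp [Kdet, mulVec, dotProduct, Fin.sum_univ_four]; ring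

theorem Kdet_two_mulVec : Kdet 2 *ᵥ ψ = ![0, (ψ 1 - ψ 2) / Real.sqrt 3] := by
  ext i; fin_cases i <;> simp [Kdet, mulVec, dotProduct, Fin.sum_univ_four]; ring

theorem Kdet_three_mulVec : Kdet 3 *ᵥ ψ = ![0, (ψ 2 - ψ 3) / Real.sqrt 3] := by
  ext i; fin_cases i <;> simp [Kdet, mulVec, dotProduct, Fin.sum_univ_four]; ring

theorem Kdet_channel_pure :
    ∑ i, Kdet i * vecMulVec ψ (star ψ) * (Kdet i)ᴴ =
      !![ψ 0 * star (ψ 0), ψ 0 * star (ψ 1 + ψ 2 + ψ 3) / Real.sqrt 3;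
         star (ψ 0) * (ψ 1 + ψ 2 + ψ 3) / Real.sqrt 3,
         ψ 1 * star (ψ 1) + ψ 2 * star (ψ 2) + ψ 3 * star (ψ 3)] := by
  have h_sqrt_sq : (Real.sqrt 3 : ℂ) ^ 2 = 3 := by norm_cast; simp
  simp only [mul_vecMulVec_star_mul_conjTranspose, Fin.sum_univ_four, Kdet_zero_mulVec,
    Kdet_one_mulVec, Kdet_two_mulVec, Kdet_three_mulVec]
  ext i j
  simp only [Matrix.add_apply, vecMulVec_apply, Pi.star_apply]
  fin_cases i <;> fin_cases j <;> simp [star_div₀, Complex.conj_ofReal]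
  · ring
  · ring
  · field_simp
    rw [h_sqrt_sq]
    ring

end Kdet

open ComplexConjugate in
theorem Kdet_channel_phased {u : ℂ} (hu : star u * u = 1) (c : Fin 4 → ℂ) :
    ∑ i, Kdet i * vecMulVec ![star u * c 0, u * c 1, u * c 2, star u * c 3]
        (star ![star u * c 0, u * c 1, u * c 2, star u * c 3]) * (Kdet i)ᴴ =
      !![c 0 * star (c 0), c 0 * (star u ^ 2 * (star (c 1) + star (c 2)) + star (c 3)) / Real.sqrt 3;
         star (c 0) * (u ^ 2 * (c 1 + c 2) + c 3) / Real.sqrt 3,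
         c 1 * star (c 1) + c 2 * star (c 2) + c 3 * star (c 3)] := by
  rw [Kdet_channel_pure]
  -- `simp` below turns `star` on `ℂ` into `conj`, which `linear_combination` treats as a new atom
  rw [Complex.star_def] at hu
  ext i j
  fin_cases i <;> fin_cases j <;> simp
  · linear_combination c 0 * conj (c 0) * hu
  · linear_combination c 0 * conj (c 3) * hu
  · linear_combination conj (c 0) * c 3 * hu
  · linear_combination (c 1 * conj (c 1) + c 2 * conj (c 2) + c 3 * conj (c 3)) * hu

theorem psiT_eq (J t : ℝ) (c : Fin 4 → ℂ) :
    psiT J t c = ![star (Complex.exp (Complex.I * J * t)) * c 0,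
      Complex.exp (Complex.I * J * t) * c 1, Complex.exp (Complex.I * J * t) * c 2,
      star (Complex.exp (Complex.I * J * t)) * c 3] := by
  rw [← Complex.exp_neg_eq_star_exp (by simp)]
  ext k
  fin_cases k <;> rfl

theorem effective_state_evolution_general (J t : ℝ) (c : Fin 4 → ℂ) :
    ∑ i, Kdet i * Matrix.vecMulVec (psiT J t c) (star (psiT J t c)) *
        (Kdet i)ᴴ =
      !![c 0 * star (c 0),
         c 0 * (Complex.exp (-(2 * Complex.I * J * t)) *
           (star (c 1) + star (c 2)) + star (c 3)) / Real.sqrt 3;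
         star (c 0) * (Complex.exp (2 * Complex.I * J * t) *
           (c 1 + c 2) + c 3) / Real.sqrt 3,
         c 1 * star (c 1) + c 2 * star (c 2) + c 3 * star (c 3)] := by
  set u := Complex.exp (Complex.I * J * t)
  have h_sq : Complex.exp (2 * Complex.I * J * t) = u ^ 2 := by
    rw [← Complex.exp_nat_mul]; ring_nf
  have h_neg_sq : Complex.exp (-(2 * Complex.I * J * t)) = star u ^ 2 := by
    rw [← star_pow, ← h_sq, ← Complex.exp_neg_eq_star_exp (by simp)]
  have h_unit : star u * u = 1 := by
    rw [← Complex.exp_neg_eq_star_exp (by simp), ← Complex.exp_add, neg_add_cancel,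
      Complex.exp_zero]
  rw [psiT_eq, h_sq, h_neg_sq]
  exact Kdet_channel_phased h_unit c

/-- The effective state seen by the blurred-and-saturated detector for the
Ising-evolved pure state. -/
theorem effective_state_evolution (J t : ℝ) (c : Fin 4 → ℂ)
    (hc : ∑ k, c k * star (c k) = 1) :
    ∑ i, Kdet i * Matrix.vecMulVec (psiT J t c) (star (psiT J t c)) *
        (Kdet i)ᴴ =
      !![c 0 * star (c 0),
         c 0 * (Complex.exp (-(2 * Complex.I * J * t)) *
           (star (c 1) + star (c 2)) + star (c 3)) / Real.sqrt 3;
         star (c 0) * (Complex.exp (2 * Complex.I * J * t) *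
           (c 1 + c 2) + c 3) / Real.sqrt 3,
         c 1 * star (c 1) + c 2 * star (c 2) + c 3 * star (c 3)] :=
  effective_state_evolution_general J t c
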